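/- Let α > 0 and let q_1, …, q_n be pairwise distinct real numbers with 2 ≤ n ≤ 6, and let Q be the associated n×n skew-symmetric matrix with entries Q_{ij} = q_{ij}|q_{ij}|^{−α−2}. If n is even then Pf Q ≠ 0; if n is odd then Pf(B(Q)) ≠ 0, where B(Q) is the (n+1)×(n+1) bordered matrix of Q. Moreover, for n = 5 and q_1 > q_2 > q_3 > q_4 > q_5, one has Pf(B(Q)) > 0. -/

import Mathlib

open scoped BigOperators

/-- The Pfaffian of an `n × n` real matrix (intended for skew-symmetric matrices
with `n` even), given by the formula
`Pf A = (1/(2^k k!)) ∑_{σ ∈ S_{2k}} sgn(σ) ∏_{i=1}^k A_{σ(2i-1),σ(2i)}` with `k = n/2`. -/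
noncomputable def Pf {n : ℕ} (A : Matrix (Fin n) (Fin n) ℝ) : ℝ :=
  (1 / (2 ^ (n / 2) * (Nat.factorial (n / 2)) : ℝ)) *
    ∑ σ : Equiv.Perm (Fin n), ((Equiv.Perm.sign σ : ℤ) : ℝ) *
      ∏ i : Fin (n / 2),
        A (σ ⟨2 * i.val, by have := i.isLt; omega⟩)
          (σ ⟨2 * i.val + 1, by have := i.isLt; omega⟩)

/-- The bordered matrix `B(A)` of an `m × m` skew-symmetric matrix `A`. -/
def border {m : ℕ} (A : Matrix (Fin m) (Fin m) ℝ) :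
    Matrix (Fin (m + 1)) (Fin (m + 1)) ℝ := fun i j =>
  if hi : (i : ℕ) < m then
    if hj : (j : ℕ) < m then A ⟨i, hi⟩ ⟨j, hj⟩ else 1
  else if (j : ℕ) < m then -1 else 0

/-!
After permuting the points (which multiplies a Pfaffian, also of a bordered matrix, by a sign)
we may assume `q₀ > q₁ > ⋯`, so that `Q i j = f (q i - q j)` for `i < j` with
`f x = x ^ (-(α + 1))`. For `n ≤ 6` the Pfaffians are explicit sums of at most fifteen products;
expanded along the first row they are positive using only that `f` is positive, decreasing,
convex and log-convex on `(0, ∞)`. Monotonicity pairs most negative terms with larger positive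
ones, convexity compares increments `f (y - xⱼ) - f (x - xⱼ)` for different `xⱼ`, and
log-convexity gives `f (a - c) * f (b - d) ≤ f (a - d) * f (b - c)` for `a > b > c > d`.
-/

open Equiv Set

namespace Equiv.Perm

lemma sum_fin_succ {M : Type*} [AddCommMonoid M] {n : ℕ} (f : Perm (Fin (n + 1)) → M) :
    ∑ σ, f σ = ∑ p, ∑ τ : Perm (Fin n), f (decomposeFin.symm (p, τ)) := by
  rw [← Equiv.sum_comp decomposeFin.symm f, Fintype.sum_prod_type]

lemma decomposeFin_symm_apply_of_ne_zero {n : ℕ} (p : Fin (n + 1)) (τ : Perm (Fin n))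
    {k : Fin (n + 1)} (hk : k ≠ 0) :
    decomposeFin.symm (p, τ) k = swap 0 p (τ (k.pred hk)).succ := by
  rw [← decomposeFin_symm_apply_succ, Fin.succ_pred]

end Equiv.Perm

namespace Tuple

lemma exists_strictAnti_comp_perm {α : Type*} [LinearOrder α] {n : ℕ} {q : Fin n → α}
    (hq : Function.Injective q) : ∃ σ : Perm (Fin n), StrictAnti (q ∘ σ) := by
  have hsort : StrictMono (q ∘ Tuple.sort q) :=
    (Tuple.monotone_sort q).strictMono_of_injective (hq.comp (Tuple.sort q).injective)
  exact ⟨Fin.revPerm.trans (Tuple.sort q), fun i j hij => hsort (Fin.rev_lt_rev.2 hij)⟩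

end Tuple

section Pfaffian

variable {n : ℕ}

lemma Pf_submatrix (A : Matrix (Fin n) (Fin n) ℝ) (σ : Perm (Fin n)) :
    Pf (A.submatrix σ σ) = (Perm.sign σ : ℝ) * Pf A := by
  unfold Pf
  rw [mul_left_comm]
  congr 1
  rw [Finset.mul_sum]
  conv_rhs => rw [← Equiv.sum_comp (Equiv.mulLeft σ) (M := ℝ)]
  refine Finset.sum_congr rfl fun π _ => ?_
  rcases Int.units_eq_one_or (Perm.sign σ) with h | h <;> simp [h]

lemma Pf_submatrix_ne_zero_iff (A : Matrix (Fin n) (Fin n) ℝ) (σ : Perm (Fin n)) :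
    Pf (A.submatrix σ σ) ≠ 0 ↔ Pf A ≠ 0 := by
  rw [Pf_submatrix]
  rcases Int.units_eq_one_or (Perm.sign σ) with h | h <;> simp [h]

lemma Pf_fin_two (A : Matrix (Fin 2) (Fin 2) ℝ) (hA : ∀ i j, A j i = -A i j) :
    Pf A = A 0 1 := by
  simp [Pf, Perm.sum_fin_succ, Fin.sum_univ_succ, hA 1 0]
  ring

lemma Pf_fin_four (A : Matrix (Fin 4) (Fin 4) ℝ) (hA : ∀ i j, A j i = -A i j) :
    Pf A = A 0 1 * A 2 3 - A 0 2 * A 1 3 + A 0 3 * A 1 2 := by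
  -- the guard `i < j` keeps `simp` from looping on skew-symmetry
  have hA' : ∀ i j : Fin 4, i < j → A j i = -A i j := fun i j _ => hA i j
  simp [Pf, Perm.sum_fin_succ, Fin.sum_univ_succ, Fin.prod_univ_succ,
    Perm.decomposeFin_symm_apply_of_ne_zero, swap_apply_of_ne_of_ne, hA']
  ring

lemma Pf_fin_six (A : Matrix (Fin 6) (Fin 6) ℝ) (hA : ∀ i j, A j i = -A i j) :
    Pf A = A 0 1 * (A 2 3 * A 4 5 - A 2 4 * A 3 5 + A 2 5 * A 3 4)
      - A 0 2 * (A 1 3 * A 4 5 - A 1 4 * A 3 5 + A 1 5 * A 3 4)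
      + A 0 3 * (A 1 2 * A 4 5 - A 1 4 * A 2 5 + A 1 5 * A 2 4)
      - A 0 4 * (A 1 2 * A 3 5 - A 1 3 * A 2 5 + A 1 5 * A 2 3)
      + A 0 5 * (A 1 2 * A 3 4 - A 1 3 * A 2 4 + A 1 4 * A 2 3) := by
  have hA' : ∀ i j : Fin 6, i < j → A j i = -A i j := fun i j _ => hA i j
  simp [Pf, Perm.sum_fin_succ, Fin.sum_univ_succ, Fin.prod_univ_succ,
    Perm.decomposeFin_symm_apply_of_ne_zero, swap_apply_of_ne_of_ne, hA']
  ring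

@[simp]
lemma border_castSucc_castSucc (A : Matrix (Fin n) (Fin n) ℝ) (i j : Fin n) :
    border A i.castSucc j.castSucc = A i j := by
  simp [border]

@[simp]
lemma border_castSucc_last (A : Matrix (Fin n) (Fin n) ℝ) (i : Fin n) :
    border A i.castSucc (Fin.last n) = 1 := by
  simp [border]

@[simp]
lemma border_last_castSucc (A : Matrix (Fin n) (Fin n) ℝ) (j : Fin n) :
    border A (Fin.last n) j.castSucc = -1 := by
  simp [border]

@[simp]
lemma border_last_last (A : Matrix (Fin n) (Fin n) ℝ) : border A (Fin.last n) (Fin.last n) = 0 := by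
  simp [border]

lemma border_skew (A : Matrix (Fin n) (Fin n) ℝ) (hA : ∀ i j, A j i = -A i j) (i j : Fin (n + 1)) :
    border A j i = -border A i j := by
  induction i using Fin.lastCases with
  | last => induction j using Fin.lastCases <;> simp
  | cast i =>
    induction j using Fin.lastCases with
    | last => simp
    | cast j => simpa using hA i j

lemma border_submatrix (A : Matrix (Fin n) (Fin n) ℝ) (σ : Perm (Fin n)) :
    border (A.submatrix σ σ) =
      (border A).submatrix (σ.viaFintypeEmbedding Fin.castSuccEmb)
        (σ.viaFintypeEmbedding Fin.castSuccEmb) := by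
  have hcast (i : Fin n) : σ.viaFintypeEmbedding Fin.castSuccEmb i.castSucc = (σ i).castSucc :=
    σ.viaFintypeEmbedding_apply_image Fin.castSuccEmb i
  have hlast : σ.viaFintypeEmbedding Fin.castSuccEmb (Fin.last n) = Fin.last n :=
    σ.viaFintypeEmbedding_apply_notMem_range Fin.castSuccEmb
      fun ⟨i, hi⟩ => Fin.castSucc_ne_last i hi
  ext i j
  induction i using Fin.lastCases <;> induction j using Fin.lastCases <;> simp [hcast, hlast]

lemma Pf_border_fin_three (A : Matrix (Fin 3) (Fin 3) ℝ) (hA : ∀ i j, A j i = -A i j) :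
    Pf (border A) = A 0 1 - A 0 2 + A 1 2 := by
  rw [Pf_fin_four _ (border_skew A hA)]
  simp [border]

lemma Pf_border_fin_five (A : Matrix (Fin 5) (Fin 5) ℝ) (hA : ∀ i j, A j i = -A i j) :
    Pf (border A) = A 0 1 * (A 2 3 - A 2 4 + A 3 4) - A 0 2 * (A 1 3 - A 1 4 + A 3 4)
      + A 0 3 * (A 1 2 - A 1 4 + A 2 4) - A 0 4 * (A 1 2 - A 1 3 + A 2 3)
      + (A 1 2 * A 3 4 - A 1 3 * A 2 4 + A 1 4 * A 2 3) := by
  rw [Pf_fin_six _ (border_skew A hA)]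
  simp [border]

end Pfaffian

lemma ConvexOn.map_sub_map_le_of_sub_eq {𝕜 : Type*} [Field 𝕜] [LinearOrder 𝕜]
    [IsStrictOrderedRing 𝕜] {s : Set 𝕜} {f : 𝕜 → 𝕜} (hf : ConvexOn 𝕜 s f) {x x' y y' : 𝕜}
    (hx : x ∈ s) (hy' : y' ∈ s) (hxy : x ≤ y) (hxx' : x ≤ x') (hsub : x' - x = y' - y) :
    f x' - f x ≤ f y' - f y := by
  obtain ⟨h, rfl⟩ : ∃ h, x' = x + h := ⟨x' - x, by ring⟩
  obtain rfl : y' = y + h := by linarith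
  rcases (show 0 ≤ h by linarith).eq_or_lt with rfl | hh
  · simp
  have hxh : x + h ∈ s := hf.1.ordConnected.out hx hy' ⟨by linarith, by linarith⟩
  have hy : y ∈ s := hf.1.ordConnected.out hx hy' ⟨hxy, by linarith⟩
  have key : (f (x + h) - f x) / h ≤ (f (y + h) - f y) / h :=
    calc (f (x + h) - f x) / h = (f (x + h) - f x) / (x + h - x) := by rw [add_sub_cancel_left]
      _ ≤ (f (y + h) - f x) / (y + h - x) :=
        hf.secant_mono hx hxh hy' (by linarith) (by linarith) (by linarith)
      _ = (f x - f (y + h)) / (x - (y + h)) := by rw [← neg_div_neg_eq, neg_sub, neg_sub]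
      _ ≤ (f y - f (y + h)) / (y - (y + h)) :=
        hf.secant_mono hy' hx hy (by linarith) (by linarith) hxy
      _ = (f (y + h) - f y) / h := by rw [← neg_div_neg_eq, neg_sub, neg_sub, add_sub_cancel_left]
  exact (div_le_div_iff_of_pos_right hh).1 key

namespace Real

lemma convexOn_rpow_of_nonpos {p : ℝ} (hp : p ≤ 0) : ConvexOn ℝ (Ioi 0) fun x : ℝ ↦ x ^ p := by
  refine ⟨convex_Ioi 0, fun x hx y hy a b ha hb hab => ?_⟩
  rw [mem_Ioi] at hx hy
  simp only [smul_eq_mul]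
  calc (a * x + b * y) ^ p ≤ (x ^ a * y ^ b) ^ p :=
        rpow_le_rpow_of_nonpos (by positivity)
          (geom_mean_le_arith_mean2_weighted ha hb hx.le hy.le hab) hp
    _ = (x ^ p) ^ a * (y ^ p) ^ b := by
        rw [mul_rpow (by positivity) (by positivity), ← rpow_mul hx.le,
          ← rpow_mul hy.le, ← rpow_mul hx.le, ← rpow_mul hy.le,
          mul_comm a, mul_comm b]
    _ ≤ a * x ^ p + b * y ^ p :=
        geom_mean_le_arith_mean2_weighted ha hb (by positivity) (by positivity) hab

lemma sub_rpow_mul_sub_rpow_le {p : ℝ} (hp : p ≤ 0) {a b c d : ℝ} (hdc : d ≤ c) (hcb : c < b)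
    (hba : b ≤ a) : (a - c) ^ p * (b - d) ^ p ≤ (a - d) ^ p * (b - c) ^ p := by
  have hbc : 0 < b - c := sub_pos.2 hcb
  rw [← mul_rpow (by linarith) (by linarith), ← mul_rpow (by linarith) hbc.le]
  exact rpow_le_rpow_of_nonpos (by nlinarith) (by nlinarith) hp

lemma mul_abs_rpow_sub_one {x : ℝ} (hx : 0 < x) (s : ℝ) : x * |x| ^ (s - 1) = x ^ s := by
  rw [abs_of_pos hx, rpow_sub_one hx.ne', mul_div_cancel₀ _ hx.ne']

end Real

section Kernel

variable {f : ℝ → ℝ}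

/-- The Pfaffian of the skew matrix with entries `f (xᵢ - xⱼ)` above the diagonal. -/
def kernelPf4 (f : ℝ → ℝ) (x₀ x₁ x₂ x₃ : ℝ) : ℝ :=
  f (x₀ - x₁) * f (x₂ - x₃) - f (x₀ - x₂) * f (x₁ - x₃) + f (x₀ - x₃) * f (x₁ - x₂)

/-- The Pfaffian of the bordered matrix of the `3 × 3` skew matrix with entries `f (xᵢ - xⱼ)`
above the diagonal. -/
def kernelBorderPf3 (f : ℝ → ℝ) (x₀ x₁ x₂ : ℝ) : ℝ :=
  f (x₀ - x₁) - f (x₀ - x₂) + f (x₁ - x₂)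

lemma kernelBorderPf3_pos (hpos : ∀ x, 0 < x → 0 < f x) (hanti : AntitoneOn f (Ioi 0))
    {x₀ x₁ x₂ : ℝ} (h₀₁ : x₁ < x₀) (h₁₂ : x₂ < x₁) : 0 < kernelBorderPf3 f x₀ x₁ x₂ := by
  have h₀₂ : f (x₀ - x₂) ≤ f (x₀ - x₁) :=
    hanti (sub_pos.2 h₀₁) (show 0 < x₀ - x₂ by linarith) (by linarith)
  have h₁₂' : 0 < f (x₁ - x₂) := hpos _ (sub_pos.2 h₁₂)
  unfold kernelBorderPf3
  linarith

lemma kernelPf4_pos (hpos : ∀ x, 0 < x → 0 < f x) (hanti : AntitoneOn f (Ioi 0))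
    {x₀ x₁ x₂ x₃ : ℝ} (h₀₁ : x₁ < x₀) (h₁₂ : x₂ < x₁) (h₂₃ : x₃ < x₂) :
    0 < kernelPf4 f x₀ x₁ x₂ x₃ := by
  have h₀₂ : f (x₀ - x₂) ≤ f (x₀ - x₁) :=
    hanti (sub_pos.2 h₀₁) (show 0 < x₀ - x₂ by linarith) (by linarith)
  have h₁₃ : f (x₁ - x₃) ≤ f (x₂ - x₃) :=
    hanti (sub_pos.2 h₂₃) (show 0 < x₁ - x₃ by linarith) (by linarith)
  have hmid : f (x₀ - x₂) * f (x₁ - x₃) ≤ f (x₀ - x₁) * f (x₂ - x₃) :=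
    mul_le_mul h₀₂ h₁₃ (hpos _ (by linarith)).le (hpos _ (by linarith)).le
  have hlast : 0 < f (x₀ - x₃) * f (x₁ - x₂) :=
    mul_pos (hpos _ (by linarith)) (hpos _ (by linarith))
  unfold kernelPf4
  linarith

lemma kernelPf4_antitoneOn (hpos : ∀ x, 0 < x → 0 < f x) (hanti : AntitoneOn f (Ioi 0))
    (hconv : ConvexOn ℝ (Ioi 0) f) {x₁ x₂ x₃ : ℝ} (h₁₂ : x₂ < x₁) (h₂₃ : x₃ < x₂) :
    AntitoneOn (fun x₀ ↦ kernelPf4 f x₀ x₁ x₂ x₃) (Ioi x₁) := by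
  intro y (hy : x₁ < y) x (hx : x₁ < x) hyx
  have anti {a b : ℝ} (ha : 0 < a) (hab : a ≤ b) : f b ≤ f a := hanti ha (ha.trans_le hab) hab
  have hincr : f (y - x₂) - f (x - x₂) ≤ f (y - x₁) - f (x - x₁) := by
    have := hconv.map_sub_map_le_of_sub_eq (x := y - x₁) (x' := x - x₁) (y := y - x₂)
      (y' := x - x₂) (sub_pos.2 hy) (show 0 < x - x₂ by linarith) (by linarith) (by linarith)
      (by ring)
    linarith
  have h₁₃ : f (x₁ - x₃) ≤ f (x₂ - x₃) := anti (by linarith) (by linarith)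
  have h₂ : 0 ≤ f (y - x₂) - f (x - x₂) := sub_nonneg.2 (anti (by linarith) (by linarith))
  have h₃ : 0 ≤ f (y - x₃) - f (x - x₃) := sub_nonneg.2 (anti (by linarith) (by linarith))
  have hmid : (f (y - x₂) - f (x - x₂)) * f (x₁ - x₃) ≤ (f (y - x₁) - f (x - x₁)) * f (x₂ - x₃) :=
    mul_le_mul hincr h₁₃ (hpos _ (by linarith)).le (h₂.trans hincr)
  have hlast : 0 ≤ (f (y - x₃) - f (x - x₃)) * f (x₁ - x₂) :=
    mul_nonneg h₃ (hpos _ (by linarith)).le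
  simp only [kernelPf4]
  linarith

lemma kernelBorderPf5_pos (hpos : ∀ x, 0 < x → 0 < f x) (hanti : AntitoneOn f (Ioi 0))
    (hconv : ConvexOn ℝ (Ioi 0) f) {x₀ x₁ x₂ x₃ x₄ : ℝ}
    (h₀₁ : x₁ < x₀) (h₁₂ : x₂ < x₁) (h₂₃ : x₃ < x₂) (h₃₄ : x₄ < x₃) :
    0 < f (x₀ - x₁) * kernelBorderPf3 f x₂ x₃ x₄ - f (x₀ - x₂) * kernelBorderPf3 f x₁ x₃ x₄
      + f (x₀ - x₃) * kernelBorderPf3 f x₁ x₂ x₄ - f (x₀ - x₄) * kernelBorderPf3 f x₁ x₂ x₃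
      + kernelPf4 f x₁ x₂ x₃ x₄ := by
  have anti {a b : ℝ} (ha : 0 < a) (hab : a ≤ b) : f b ≤ f a := hanti ha (ha.trans_le hab) hab
  have pos {a : ℝ} (ha : 0 < a) : 0 ≤ f a := (hpos a ha).le
  have incr {a a' b b' : ℝ} (ha : 0 < a) (hab : a ≤ b) (haa' : a ≤ a') (hsub : a' - a = b' - b) :
      f a' - f a ≤ f b' - f b :=
    hconv.map_sub_map_le_of_sub_eq ha (show 0 < b' by linarith) hab haa' hsub
  have c₁ : f (x₀ - x₂) - f (x₁ - x₂) ≤ f (x₀ - x₃) - f (x₁ - x₃) :=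
    incr (by linarith) (by linarith) (by linarith) (by ring)
  have c₂ : f (x₂ - x₄) - f (x₂ - x₃) ≤ f (x₁ - x₄) - f (x₁ - x₃) :=
    incr (by linarith) (by linarith) (by linarith) (by ring)
  have e₁ : (f (x₁ - x₃) - f (x₀ - x₃)) * f (x₂ - x₄) ≤ (f (x₁ - x₂) - f (x₀ - x₂)) * f (x₃ - x₄) :=
    mul_le_mul (by linarith) (anti (by linarith) (by linarith)) (pos (by linarith))
      (sub_nonneg.2 (anti (by linarith) (by linarith)))
  have e₂ : 0 ≤ (f (x₁ - x₄) - f (x₀ - x₄)) * f (x₂ - x₃) :=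
    mul_nonneg (sub_nonneg.2 (anti (by linarith) (by linarith))) (pos (by linarith))
  have e₃ : f (x₀ - x₂) * (f (x₁ - x₃) - f (x₁ - x₄)) ≤ f (x₀ - x₁) * (f (x₂ - x₃) - f (x₂ - x₄)) :=
    mul_le_mul (anti (by linarith) (by linarith)) (by linarith)
      (sub_nonneg.2 (anti (by linarith) (by linarith))) (pos (by linarith))
  have e₄ : 0 ≤ f (x₁ - x₂) * (f (x₀ - x₃) - f (x₀ - x₄)) :=
    mul_nonneg (pos (by linarith)) (sub_nonneg.2 (anti (by linarith) (by linarith)))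
  have e₅ : f (x₀ - x₃) * f (x₁ - x₄) ≤ f (x₀ - x₁) * f (x₃ - x₄) :=
    mul_le_mul (anti (by linarith) (by linarith)) (anti (by linarith) (by linarith))
      (pos (by linarith)) (pos (by linarith))
  have e₆ : 0 < f (x₀ - x₄) * f (x₁ - x₃) := mul_pos (hpos _ (by linarith)) (hpos _ (by linarith))
  simp only [kernelBorderPf3, kernelPf4]
  linarith

lemma kernelPf6_pos (hpos : ∀ x, 0 < x → 0 < f x) (hanti : AntitoneOn f (Ioi 0))
    (hconv : ConvexOn ℝ (Ioi 0) f)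
    (hlogconv : ∀ a b c d, d < c → c < b → b < a → f (a - c) * f (b - d) ≤ f (a - d) * f (b - c))
    {x₀ x₁ x₂ x₃ x₄ x₅ : ℝ} (h₀₁ : x₁ < x₀) (h₁₂ : x₂ < x₁) (h₂₃ : x₃ < x₂) (h₃₄ : x₄ < x₃)
    (h₄₅ : x₅ < x₄) :
    0 < f (x₀ - x₁) * kernelPf4 f x₂ x₃ x₄ x₅ - f (x₀ - x₂) * kernelPf4 f x₁ x₃ x₄ x₅
      + f (x₀ - x₃) * kernelPf4 f x₁ x₂ x₄ x₅ - f (x₀ - x₄) * kernelPf4 f x₁ x₂ x₃ x₅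
      + f (x₀ - x₅) * kernelPf4 f x₁ x₂ x₃ x₄ := by
  have anti {a b : ℝ} (ha : 0 < a) (hab : a ≤ b) : f b ≤ f a := hanti ha (ha.trans_le hab) hab
  have pos {a : ℝ} (ha : 0 < a) : 0 ≤ f a := (hpos a ha).le
  have hP₁ : 0 ≤ kernelPf4 f x₁ x₃ x₄ x₅ := (kernelPf4_pos hpos hanti (by linarith) h₃₄ h₄₅).le
  have hP₂ : kernelPf4 f x₁ x₃ x₄ x₅ ≤ kernelPf4 f x₂ x₃ x₄ x₅ :=
    kernelPf4_antitoneOn hpos hanti hconv h₃₄ h₄₅ (show x₃ < x₂ from h₂₃)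
      (show x₃ < x₁ by linarith) h₁₂.le
  have e₁ : f (x₀ - x₂) * kernelPf4 f x₁ x₃ x₄ x₅ ≤ f (x₀ - x₁) * kernelPf4 f x₂ x₃ x₄ x₅ :=
    mul_le_mul (anti (by linarith) (by linarith)) hP₂ hP₁ (pos (by linarith))
  have e₂ : f (x₀ - x₅) * (f (x₁ - x₃) * f (x₂ - x₄)) ≤
      f (x₀ - x₅) * (f (x₁ - x₂) * f (x₃ - x₄)) :=
    mul_le_mul_of_nonneg_left (mul_le_mul (anti (by linarith) (by linarith))
      (anti (by linarith) (by linarith)) (pos (by linarith)) (pos (by linarith)))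
      (pos (by linarith))
  have e₃ : f (x₁ - x₂) * (f (x₀ - x₄) * f (x₃ - x₅)) ≤
      f (x₁ - x₂) * (f (x₀ - x₃) * f (x₄ - x₅)) :=
    mul_le_mul_of_nonneg_left (mul_le_mul (anti (by linarith) (by linarith))
      (anti (by linarith) (by linarith)) (pos (by linarith)) (pos (by linarith)))
      (pos (by linarith))
  have e₄ : f (x₂ - x₅) * (f (x₀ - x₃) * f (x₁ - x₄)) ≤
      f (x₂ - x₅) * (f (x₀ - x₄) * f (x₁ - x₃)) :=
    mul_le_mul_of_nonneg_left (hlogconv _ _ _ _ h₃₄ (by linarith) h₀₁) (pos (by linarith))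
  have e₅ : f (x₂ - x₃) * (f (x₀ - x₄) * f (x₁ - x₅)) ≤
      f (x₂ - x₃) * (f (x₀ - x₅) * f (x₁ - x₄)) :=
    mul_le_mul_of_nonneg_left (hlogconv _ _ _ _ h₄₅ (by linarith) h₀₁) (pos (by linarith))
  have e₆ : 0 < f (x₀ - x₃) * (f (x₁ - x₅) * f (x₂ - x₄)) :=
    mul_pos (hpos _ (by linarith)) (mul_pos (hpos _ (by linarith)) (hpos _ (by linarith)))
  simp only [kernelPf4] at e₁ ⊢
  linarith

end Kernel

section KernelMatrix

variable {f : ℝ → ℝ} {n : ℕ}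

lemma Pf_pos_of_kernel (hn2 : 2 ≤ n) (hn6 : n ≤ 6) (hn : Even n) (hpos : ∀ x, 0 < x → 0 < f x)
    (hanti : AntitoneOn f (Ioi 0)) (hconv : ConvexOn ℝ (Ioi 0) f)
    (hlogconv : ∀ a b c d, d < c → c < b → b < a → f (a - c) * f (b - d) ≤ f (a - d) * f (b - c))
    {q : Fin n → ℝ} (hq : StrictAnti q) {A : Matrix (Fin n) (Fin n) ℝ}
    (hA : ∀ i j, A j i = -A i j) (hAq : ∀ i j, i < j → A i j = f (q i - q j)) : 0 < Pf A := by
  interval_cases n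
  · rw [Pf_fin_two A hA, hAq 0 1 (by decide)]
    exact hpos _ (sub_pos.2 (hq (by decide)))
  · exact absurd hn (by decide)
  · rw [Pf_fin_four A hA]
    simp (disch := decide) only [hAq]
    exact kernelPf4_pos hpos hanti (hq (by decide)) (hq (by decide)) (hq (by decide))
  · exact absurd hn (by decide)
  · rw [Pf_fin_six A hA]
    simp (disch := decide) only [hAq]
    exact kernelPf6_pos hpos hanti hconv hlogconv (hq (by decide)) (hq (by decide))
      (hq (by decide)) (hq (by decide)) (hq (by decide))

lemma Pf_border_pos_of_kernel (hn2 : 2 ≤ n) (hn6 : n ≤ 6) (hn : Odd n)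
    (hpos : ∀ x, 0 < x → 0 < f x) (hanti : AntitoneOn f (Ioi 0)) (hconv : ConvexOn ℝ (Ioi 0) f)
    {q : Fin n → ℝ} (hq : StrictAnti q) {A : Matrix (Fin n) (Fin n) ℝ}
    (hA : ∀ i j, A j i = -A i j) (hAq : ∀ i j, i < j → A i j = f (q i - q j)) :
    0 < Pf (border A) := by
  interval_cases n
  · exact absurd hn (by decide)
  · rw [Pf_border_fin_three A hA]
    simp (disch := decide) only [hAq]
    exact kernelBorderPf3_pos hpos hanti (hq (by decide)) (hq (by decide))
  · exact absurd hn (by decide)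
  · rw [Pf_border_fin_five A hA]
    simp (disch := decide) only [hAq]
    exact kernelBorderPf5_pos hpos hanti hconv (hq (by decide)) (hq (by decide))
      (hq (by decide)) (hq (by decide))
  · exact absurd hn (by decide)

end KernelMatrix

theorem stmt8 (n : ℕ) (hn : 2 ≤ n) (hn6 : n ≤ 6) (α : ℝ) (hα : 0 < α)
    (q : Fin n → ℝ) (hq : Function.Injective q)
    (Q : Matrix (Fin n) (Fin n) ℝ)
    (hQ : ∀ i j, Q i j = (q i - q j) * |q i - q j| ^ (-α - 2)) :
    (Even n → Pf Q ≠ 0) ∧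
    (Odd n → Pf (border Q) ≠ 0) ∧
    (n = 5 → StrictAnti q → 0 < Pf (border Q)) := by
  have hp : -(α + 1) ≤ 0 := by linarith
  have hpos (x : ℝ) (hx : 0 < x) : 0 < x ^ (-(α + 1)) := Real.rpow_pos_of_pos hx _
  have hanti := Real.antitoneOn_rpow_Ioi_of_exponent_nonpos hp
  have hconv := Real.convexOn_rpow_of_nonpos hp
  have hlogconv (a b c d : ℝ) (hdc : d < c) (hcb : c < b) (hba : b < a) :=
    Real.sub_rpow_mul_sub_rpow_le hp hdc.le hcb hba.le
  have hskew (i j : Fin n) : Q j i = -Q i j := by rw [hQ, hQ, abs_sub_comm]; ring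
  have hQq {i j : Fin n} (h : q j < q i) : Q i j = (q i - q j) ^ (-(α + 1)) := by
    rw [hQ, show -α - 2 = -(α + 1) - 1 by ring, Real.mul_abs_rpow_sub_one (sub_pos.2 h)]
  obtain ⟨σ, hσ⟩ := Tuple.exists_strictAnti_comp_perm hq
  have hσQ (i j : Fin n) (h : i < j) := hQq (hσ h)
  refine ⟨fun he => ?_, fun ho => ?_, fun h5 hq5 => ?_⟩
  · exact (Pf_submatrix_ne_zero_iff Q σ).1
      (Pf_pos_of_kernel hn hn6 he hpos hanti hconv hlogconv hσ (fun i j => hskew _ _) hσQ).ne'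
  · rw [← Pf_submatrix_ne_zero_iff _ (σ.viaFintypeEmbedding Fin.castSuccEmb), ← border_submatrix]
    exact (Pf_border_pos_of_kernel hn hn6 ho hpos hanti hconv hσ (fun i j => hskew _ _) hσQ).ne'
  · subst h5
    exact Pf_border_pos_of_kernel hn hn6 (by decide) hpos hanti hconv hq5 hskew
      fun i j h => hQq (hq5 h)
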